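/- Let f : ℝⁿ → ℂ be bounded and slowly oscillating at infinity in the following sense: for every β ∈ ℤⁿ, lim_{ℤⁿ∋α→∞} sup_{y∈[0,1]ⁿ} |f(y + α + β) − f(y + α)| = 0. Suppose h : ℕ → ℤⁿ is a sequence tending to infinity and g : ℝⁿ → ℂ is a function such that f(x + h(m)) → g(x) as m → ∞ for every x ∈ ℝⁿ. Then g is ℤⁿ-periodic, i.e., g(x + β) = g(x) for all x ∈ ℝⁿ and all β ∈ ℤⁿ. -/

import Mathlib

open Filter Topology

/-- The canonical embedding `ℤⁿ → ℝⁿ`. -/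
def intToReal (n : ℕ) (α : Fin n → ℤ) : Fin n → ℝ := fun i => (α i : ℝ)

/-- A bounded function `f : ℝⁿ → ℂ` is slowly oscillating at infinity: for every
`β ∈ ℤⁿ`, `sup_{y ∈ [0,1]ⁿ} |f(y + α + β) - f(y + α)| → 0` as `ℤⁿ ∋ α → ∞`. -/
def SlowlyOscillating (n : ℕ) (f : (Fin n → ℝ) → ℂ) : Prop :=
  ∀ β : Fin n → ℤ, ∀ ε : ℝ, 0 < ε → ∃ R : ℝ, ∀ α : Fin n → ℤ, R < ‖α‖ →
    ∀ y : Fin n → ℝ, (∀ i, y i ∈ Set.Icc (0 : ℝ) 1) →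
      ‖f (y + intToReal n α + intToReal n β) - f (y + intToReal n α)‖ ≤ ε

/-! Write `x = y + γ` with `y ∈ [0,1]ⁿ` and `γ ∈ ℤⁿ`. Then
`f (x + β + h m) - f (x + h m)` is the oscillation of `f` at `α = γ + h m` evaluated at `y`,
and `α → ∞` with `h m`, so this difference tends to `0`; its limit is `g (x + β) - g x`. -/

theorem intToReal_add (n : ℕ) (α β : Fin n → ℤ) :
    intToReal n (α + β) = intToReal n α + intToReal n β := by
  ext i
  simp [intToReal]

theorem exists_mem_Icc_add_intToReal (n : ℕ) (x : Fin n → ℝ) :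
    ∃ y : Fin n → ℝ, (∀ i, y i ∈ Set.Icc (0 : ℝ) 1) ∧
      ∃ γ : Fin n → ℤ, x = y + intToReal n γ :=
  ⟨fun i => Int.fract (x i), fun i => ⟨Int.fract_nonneg _, (Int.fract_lt_one _).le⟩,
    fun i => ⌊x i⌋, by ext i; simp [intToReal, Int.fract_add_floor]⟩

theorem tendsto_norm_const_add_atTop {E ι : Type*} [SeminormedAddGroup E] {l : Filter ι}
    {h : ι → E} (hh : Tendsto (fun m => ‖h m‖) l atTop) (γ : E) :
    Tendsto (fun m => ‖γ + h m‖) l atTop := by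
  refine tendsto_atTop_mono (fun m => ?_) (tendsto_atTop_add_const_right l (-‖γ‖) hh)
  have := norm_add_le (-γ) (γ + h m)
  rw [neg_add_cancel_left, norm_neg] at this
  linarith

theorem SlowlyOscillating.tendsto_sub_zero {n : ℕ} {f : (Fin n → ℝ) → ℂ}
    (hso : SlowlyOscillating n f) {ι : Type*} {l : Filter ι} {h : ι → Fin n → ℤ}
    (hh : Tendsto (fun m => ‖h m‖) l atTop) (x : Fin n → ℝ) (β : Fin n → ℤ) :
    Tendsto (fun m => f (x + intToReal n β + intToReal n (h m)) - f (x + intToReal n (h m)))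
      l (𝓝 0) := by
  obtain ⟨y, hy, γ, rfl⟩ := exists_mem_Icc_add_intToReal n x
  rw [Metric.tendsto_nhds]
  intro ε hε
  obtain ⟨R, hR⟩ := hso β (ε / 2) (half_pos hε)
  filter_upwards [(tendsto_norm_const_add_atTop hh γ).eventually_gt_atTop R] with m hm
  have hosc := hR (γ + h m) hm y hy
  rw [intToReal_add] at hosc
  rw [dist_zero_right]
  calc _ = ‖f (y + (intToReal n γ + intToReal n (h m)) + intToReal n β)
        - f (y + (intToReal n γ + intToReal n (h m)))‖ := by congr 3 <;> abel
    _ < ε := by linarith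

theorem slowly_oscillating_limit_periodic_general (n : ℕ) (f : (Fin n → ℝ) → ℂ)
    (hso : SlowlyOscillating n f)
    (h : ℕ → Fin n → ℤ) (hinf : ∀ R : ℝ, ∃ m₀ : ℕ, ∀ m ≥ m₀, R < ‖h m‖)
    (g : (Fin n → ℝ) → ℂ)
    (hconv : ∀ x : Fin n → ℝ,
      Tendsto (fun m => f (x + intToReal n (h m))) atTop (nhds (g x))) :
    ∀ (x : Fin n → ℝ) (β : Fin n → ℤ), g (x + intToReal n β) = g x := by
  intro x β
  have hh : Tendsto (fun m => ‖h m‖) atTop atTop := tendsto_atTop.2 fun R =>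
    let ⟨m₀, hm₀⟩ := hinf R
    eventually_atTop.2 ⟨m₀, fun m hm => (hm₀ m hm).le⟩
  exact sub_eq_zero.mp <|
    tendsto_nhds_unique ((hconv _).sub (hconv x)) (hso.tendsto_sub_zero hh x β)

/-- Let `f : ℝⁿ → ℂ` be bounded and slowly oscillating at infinity.
If `h : ℕ → ℤⁿ` tends to infinity and `f(· + h(m))` converges pointwise to `g`, then `g`
is `ℤⁿ`-periodic. -/
theorem slowly_oscillating_limit_periodic (n : ℕ) (f : (Fin n → ℝ) → ℂ)
    (hbd : ∃ M : ℝ, ∀ x, ‖f x‖ ≤ M) (hso : SlowlyOscillating n f)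
    (h : ℕ → Fin n → ℤ) (hinf : ∀ R : ℝ, ∃ m₀ : ℕ, ∀ m ≥ m₀, R < ‖h m‖)
    (g : (Fin n → ℝ) → ℂ)
    (hconv : ∀ x : Fin n → ℝ,
      Tendsto (fun m => f (x + intToReal n (h m))) atTop (nhds (g x))) :
    ∀ (x : Fin n → ℝ) (β : Fin n → ℤ), g (x + intToReal n β) = g x :=
  slowly_oscillating_limit_periodic_general n f hso h hinf g hconv
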